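/- Let $G \subseteq \mathbb{C}^n$ be a taut domain, let $a, z_0 \in G$ with $z_0 \neq a$. Then there exists an extremal disc for the pair $(a, z_0)$: a holomorphic map $\varphi \in \mathcal{O}(\mathbb{D}, G)$ and $\lambda_0 \in (0,1)$ such that $\varphi(0) = a$, $\varphi(\lambda_0) = z_0$, and $\tilde{\ell}^*_G(a, z_0) = \lambda_0$. -/

import Mathlib

open Complex Metric MeasureTheory Filter Topology Set
open scoped ENNReal

noncomputable section

abbrev Cn (n : ℕ) := EuclideanSpace ℂ (Fin n)

variable {n : ℕ}

/-- `-log u` with values in `ℝ≥0∞` (for `0 ≤ u < 1`); equals `⊤` where `u ≤ 0`. -/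
def negLog (u : Cn n → ℝ) (z : Cn n) : ℝ≥0∞ :=
  if u z ≤ 0 then ⊤ else ENNReal.ofReal (-Real.log (u z))

/-- `log u` is plurisubharmonic on `G`: `-log u` (as an `ℝ≥0∞`-valued function) is
lower semicontinuous on `G` and satisfies the super-mean-value inequality on every
closed complex disc contained in `G`. -/
def LogPshOn (u : Cn n → ℝ) (G : Set (Cn n)) : Prop :=
  LowerSemicontinuousOn (negLog u) G ∧
  ∀ z ∈ G, ∀ w : Cn n, ∀ r : ℝ, 0 < r →
    (∀ lam : ℂ, ‖lam‖ ≤ r → z + lam • w ∈ G) →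
    (∫⁻ θ in Set.Ioc (0:ℝ) (2 * Real.pi),
        negLog u (z + (((r : ℂ) * Complex.exp ((θ : ℂ) * Complex.I))) • w)) ≤
      ENNReal.ofReal (2 * Real.pi) * negLog u z

/-- The family `exp 𝓛_a(G)`: `u : G → [0,1)` with `log u` plurisubharmonic and
`u(z) ≤ M‖z-a‖` for some `M > 0`. -/
def GreenCand (G : Set (Cn n)) (a : Cn n) (u : Cn n → ℝ) : Prop :=
  (∀ z ∈ G, 0 ≤ u z ∧ u z < 1) ∧
  (∃ M : ℝ, 0 < M ∧ ∀ z ∈ G, u z ≤ M * ‖z - a‖) ∧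
  LogPshOn u G

/-- The pluricomplex Green function with pole at `a`. -/
def greenFn (G : Set (Cn n)) (a z : Cn n) : ℝ :=
  sSup { t : ℝ | ∃ u : Cn n → ℝ, GreenCand G a u ∧ t = u z }

/-- The Azukawa pseudometric. -/
def azukawa (G : Set (Cn n)) (a X : Cn n) : ℝ :=
  sSup { t : ℝ | ∃ u : Cn n → ℝ, GreenCand G a u ∧
    t = Filter.limsup (fun lam : ℂ => u (a + lam • X) / ‖lam‖) (𝓝[≠] (0:ℂ)) }

/-- `tanh` of the Lempert function. -/
def lempertStar (G : Set (Cn n)) (a z : Cn n) : ℝ :=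
  sInf { t : ℝ | ∃ (φ : ℂ → Cn n) (lam : ℂ), ‖lam‖ < 1 ∧
    DifferentiableOn ℂ φ (ball (0:ℂ) 1) ∧ Set.MapsTo φ (ball (0:ℂ) 1) G ∧
    φ 0 = a ∧ φ lam = z ∧ t = ‖lam‖ }

/-- The Kobayashi–Royden pseudometric. -/
def kobayashiRoyden (G : Set (Cn n)) (a X : Cn n) : ℝ :=
  sInf { t : ℝ | ∃ (α : ℂ) (φ : ℂ → Cn n),
    DifferentiableOn ℂ φ (ball (0:ℂ) 1) ∧ Set.MapsTo φ (ball (0:ℂ) 1) G ∧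
    φ 0 = a ∧ α • deriv φ 0 = X ∧ t = ‖α‖ }

/-- `G` is taut: every sequence of holomorphic discs in `G` has a subsequence that either
converges locally uniformly on `𝔻` to a holomorphic disc in `G`, or is compactly divergent. -/
def Taut (G : Set (Cn n)) : Prop :=
  ∀ φ : ℕ → ℂ → Cn n,
    (∀ j, DifferentiableOn ℂ (φ j) (ball (0:ℂ) 1) ∧ Set.MapsTo (φ j) (ball (0:ℂ) 1) G) →
    ∃ σ : ℕ → ℕ, StrictMono σ ∧
      ((∃ ψ : ℂ → Cn n, DifferentiableOn ℂ ψ (ball (0:ℂ) 1) ∧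
          Set.MapsTo ψ (ball (0:ℂ) 1) G ∧
          TendstoLocallyUniformlyOn (fun j => φ (σ j)) ψ atTop (ball (0:ℂ) 1)) ∨
       (∀ K : Set ℂ, ∀ L : Set (Cn n), K ⊆ ball (0:ℂ) 1 → IsCompact K →
          L ⊆ G → IsCompact L → ∀ᶠ j in atTop, ∀ x ∈ K, φ (σ j) x ∉ L))

/-- `F` is a biholomorphism of `G₁` onto `G₂`. -/
def Biholo (G1 G2 : Set (Cn n)) (F : Cn n → Cn n) : Prop :=
  DifferentiableOn ℂ F G1 ∧ Set.BijOn F G1 G2 ∧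
  ∃ Finv : Cn n → Cn n, DifferentiableOn ℂ Finv G2 ∧ Set.MapsTo Finv G2 G1 ∧
    (∀ z ∈ G1, Finv (F z) = z) ∧ (∀ w ∈ G2, F (Finv w) = w)



section ExtremalHelpers

private lemma aeval_diff' (p : Polynomial ℝ) :
    Differentiable ℂ (fun ζ : ℂ => (Polynomial.aeval ζ) p) := by
  have h : (fun ζ : ℂ => (Polynomial.aeval ζ) p)
      = fun ζ => (p.map (algebraMap ℝ ℂ)).eval ζ := by
    funext ζ; rw [Polynomial.aeval_def, Polynomial.eval₂_eq_eval_map]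
  rw [h]; exact (p.map (algebraMap ℝ ℂ)).differentiable

private lemma aeval_real' (p : Polynomial ℝ) (x : ℝ) :
    (Polynomial.aeval (x:ℂ)) p = ((p.eval x : ℝ) : ℂ) := by
  rw [show ((x:ℝ):ℂ) = algebraMap ℝ ℂ x from rfl,
    Polynomial.aeval_algebraMap_apply_eq_algebraMap_eval]
  rfl

private lemma euclid_sum_single' {n : ℕ} (z : Cn n) :
    ∑ k, z k • EuclideanSpace.single k (1:ℂ) = z := by
  have h := (EuclideanSpace.basisFun (Fin n) ℂ).sum_repr z
  simpa [EuclideanSpace.basisFun_repr, EuclideanSpace.basisFun_apply] using h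

private lemma exp_aux' {c : ℝ} (h0 : 0 < c) (h : c ≤ 1/2) :
    Real.cosh c - 1 + Real.sinh c ≤ 2 * c := by
  have h1 : Real.cosh c + Real.sinh c = Real.exp c := Real.cosh_add_sinh c
  have h2 : (-c) + 1 ≤ Real.exp (-c) := Real.add_one_le_exp _
  have h3 : Real.exp (-c) * Real.exp c = 1 := by rw [← Real.exp_add]; simp
  have h4 : (0:ℝ) < Real.exp c := Real.exp_pos c
  nlinarith [mul_le_mul_of_nonneg_right h2 (le_of_lt h4)]

private lemma sin_est' {z : ℂ} {c : ℝ} (h0 : 0 < c) (hc : c ≤ 1/2) (hy : |z.im| ≤ c) :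
    ‖Complex.sin z - ((Real.sin z.re : ℝ) : ℂ)‖ ≤ 2 * c := by
  set x := z.re; set y := z.im
  have hz : z = (x:ℂ) + (y:ℂ) * Complex.I := (Complex.re_add_im _).symm
  have he : Complex.sin z - ((Real.sin x : ℝ) : ℂ)
      = ((Real.sin x * (Real.cosh y - 1) : ℝ) : ℂ)
        + ((Real.cos x * Real.sinh y : ℝ) : ℂ) * Complex.I := by
    rw [hz, Complex.sin_add_mul_I, ← Complex.ofReal_sin, ← Complex.ofReal_cosh,
      ← Complex.ofReal_cos, ← Complex.ofReal_sinh]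
    push_cast; ring
  rw [he]
  refine le_trans (Complex.norm_le_abs_re_add_abs_im _) ?_
  simp only [Complex.add_re, Complex.add_im, Complex.ofReal_re, Complex.ofReal_im,
    Complex.mul_re, Complex.mul_im, Complex.I_re, Complex.I_im, mul_zero, mul_one,
    zero_mul, sub_zero, zero_add, zero_sub, add_zero, neg_zero]
  have h1 : |Real.sin x * (Real.cosh y - 1)| ≤ Real.cosh c - 1 := by
    rw [abs_mul]
    have hs : |Real.sin x| ≤ 1 := Real.abs_sin_le_one x
    have hcy : 1 ≤ Real.cosh y := Real.one_le_cosh y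
    have hcc : Real.cosh y ≤ Real.cosh c := Real.cosh_le_cosh.mpr (by rwa [_root_.abs_of_pos h0])
    have habs : |Real.cosh y - 1| = Real.cosh y - 1 := _root_.abs_of_nonneg (by linarith)
    nlinarith [abs_nonneg (Real.sin x)]
  have h2 : |Real.cos x * Real.sinh y| ≤ Real.sinh c := by
    rw [abs_mul]
    have hcx : |Real.cos x| ≤ 1 := Real.abs_cos_le_one x
    have hsy : |Real.sinh y| ≤ Real.sinh c := by
      rw [Real.abs_sinh]; exact Real.sinh_le_sinh.mpr hy
    nlinarith [abs_nonneg (Real.sinh y), abs_nonneg (Real.cos x),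
      le_trans (abs_nonneg (Real.sinh y)) hsy]
  have h3 := exp_aux' h0 hc
  linarith

/-- the strip map -/
def vf (c : ℝ) (w : ℂ) : ℂ :=
  ((2*c/Real.pi : ℝ) : ℂ) * Complex.log ((1+w)/(1-w)) - ((Real.pi/2 : ℝ) : ℂ)

private lemma repos' {w : ℂ} (hw : w ∈ ball (0:ℂ) 1) : 0 < ((1+w)/(1-w)).re := by
  have habs : ‖w‖ < 1 := by simpa [mem_ball, dist_zero_right] using hw
  have h1 : Complex.normSq w < 1 := by nlinarith [Complex.sq_norm w, norm_nonneg w]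
  have hne : (1:ℂ) - w ≠ 0 := by
    intro h
    have : w = 1 := by linear_combination -h
    rw [this] at habs; simp at habs
  have hpos : 0 < Complex.normSq (1 - w) := Complex.normSq_pos.mpr hne
  rw [Complex.div_re, ← add_div]
  apply div_pos ?_ hpos
  have hns := Complex.normSq_apply w
  simp only [Complex.add_re, Complex.one_re, Complex.sub_re, Complex.add_im,
    Complex.one_im, Complex.sub_im]
  nlinarith [hns]

private lemma oneSubNe' {w : ℂ} (hw : w ∈ ball (0:ℂ) 1) : (1:ℂ) - w ≠ 0 := by
  have habs : ‖w‖ < 1 := by simpa [mem_ball, dist_zero_right] using hw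
  intro h
  have : w = 1 := by linear_combination -h
  rw [this] at habs; simp at habs

private lemma vf_im {c : ℝ} {w : ℂ} (hc : 0 < c) (hw : w ∈ ball (0:ℂ) 1) :
    |(vf c w).im| ≤ c := by
  have hre := repos' hw
  have harg : |Complex.arg ((1+w)/(1-w))| < Real.pi/2 :=
    Complex.abs_arg_lt_pi_div_two_iff.mpr (Or.inl hre)
  have him : (vf c w).im = (2*c/Real.pi) * Complex.arg ((1+w)/(1-w)) := by
    simp [vf, Complex.sub_im, Complex.im_ofReal_mul, Complex.log_im]
  rw [him, abs_mul]
  have hpi := Real.pi_pos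
  have h2 : |2*c/Real.pi| = 2*c/Real.pi := _root_.abs_of_pos (by positivity)
  rw [h2]
  calc 2*c/Real.pi * |Complex.arg ((1+w)/(1-w))| ≤ 2*c/Real.pi * (Real.pi/2) := by
        apply mul_le_mul_of_nonneg_left (le_of_lt harg) (by positivity)
    _ = c := by field_simp

private lemma vf_diff (c : ℝ) {w : ℂ} (hw : w ∈ ball (0:ℂ) 1) :
    DifferentiableAt ℂ (vf c) w := by
  have hne := oneSubNe' hw
  have hd1 : DifferentiableAt ℂ (fun w : ℂ => (1+w)/(1-w)) w := by
    apply DifferentiableAt.div (by fun_prop) (by fun_prop) hne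
  have hslit : (1+w)/(1-w) ∈ Complex.slitPlane :=
    Complex.mem_slitPlane_iff.mpr (Or.inl (repos' hw))
  have hlog : DifferentiableAt ℂ (fun w : ℂ => Complex.log ((1+w)/(1-w))) w := hd1.clog hslit
  exact ((differentiableAt_const _).mul hlog).sub (differentiableAt_const _)

private lemma vf_zero (c : ℝ) : vf c 0 = -((Real.pi/2 : ℝ) : ℂ) := by
  simp [vf]

private lemma vf_t {c : ℝ} (hc : 0 < c) :
    vf c (((Real.exp (Real.pi^2/(2*c)) - 1)/(Real.exp (Real.pi^2/(2*c)) + 1) : ℝ) : ℂ)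
      = ((Real.pi/2 : ℝ) : ℂ) := by
  set L := Real.pi^2/(2*c) with hLdef
  set t := (Real.exp L - 1)/(Real.exp L + 1) with htdef
  have hpi := Real.pi_pos
  have hL : 0 < L := by positivity
  have hexp1 : 1 < Real.exp L := by
    calc (1:ℝ) = Real.exp 0 := by simp
      _ < Real.exp L := Real.exp_lt_exp.mpr hL
  have ht0 : 0 < t := div_pos (by linarith) (by linarith)
  have ht1 : t < 1 := (div_lt_one (by linarith)).mpr (by linarith)
  have hr : (1 + t)/(1 - t) = Real.exp L := by
    rw [div_eq_iff (by linarith : (1:ℝ) - t ≠ 0)]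
    have hne : Real.exp L + 1 ≠ 0 := by linarith
    have h' : t * (Real.exp L + 1) = Real.exp L - 1 := by rw [htdef, div_mul_cancel₀ _ hne]
    linear_combination h'
  have hratio : (1 + (t:ℂ))/(1 - (t:ℂ)) = ((Real.exp L : ℝ) : ℂ) := by
    rw [show (1+(t:ℂ)) = (((1+t:ℝ)):ℂ) by push_cast; ring,
      show (1-(t:ℂ)) = (((1-t:ℝ)):ℂ) by push_cast; ring,
      ← Complex.ofReal_div, hr]
  rw [vf, hratio, ← Complex.ofReal_log (le_of_lt (Real.exp_pos L)), Real.log_exp,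
    ← Complex.ofReal_mul, ← Complex.ofReal_sub]
  congr 1
  rw [hLdef]
  field_simp
  ring

/-- approximation of a continuous curve by an entire map, with exact endpoint
interpolation -/
private lemma poly_approx {n : ℕ} (Γ : ℝ → Cn n) (hΓ : Continuous Γ) {ε : ℝ} (hε : 0 < ε) :
    ∃ P : ℂ → Cn n, Differentiable ℂ P ∧ P 0 = Γ 0 ∧ P 1 = Γ 1 ∧
      ∀ x ∈ Icc (0:ℝ) 1, ‖P x - Γ x‖ ≤ 3 * ((n:ℝ) * (2*ε)) := by
  have hcoordR : ∀ k : Fin n, ∃ p : Polynomial ℝ,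
      ∀ x ∈ Icc (0:ℝ) 1, |p.eval x - (Γ x k).re| < ε := fun k =>
    exists_polynomial_near_of_continuousOn 0 1 _
      (((Complex.continuous_re.comp
        ((EuclideanSpace.proj k).continuous.comp hΓ))).continuousOn) ε hε
  have hcoordI : ∀ k : Fin n, ∃ p : Polynomial ℝ,
      ∀ x ∈ Icc (0:ℝ) 1, |p.eval x - (Γ x k).im| < ε := fun k =>
    exists_polynomial_near_of_continuousOn 0 1 _
      (((Complex.continuous_im.comp
        ((EuclideanSpace.proj k).continuous.comp hΓ))).continuousOn) ε hε
  choose p hp using hcoordR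
  choose r hr using hcoordI
  set q : Fin n → ℂ → ℂ := fun k ζ =>
    (Polynomial.aeval ζ) (p k) + Complex.I * (Polynomial.aeval ζ) (r k) with hq
  have hqdiff : ∀ k, Differentiable ℂ (q k) := fun k =>
    (aeval_diff' (p k)).add ((aeval_diff' (r k)).const_mul Complex.I)
  set Q : ℂ → Cn n := fun ζ => ∑ k, q k ζ • EuclideanSpace.single k (1:ℂ) with hQ
  have hQdiff : Differentiable ℂ Q := by
    apply Differentiable.fun_sum
    intro k _
    exact (hqdiff k).smul_const _
  have hQbound : ∀ x ∈ Icc (0:ℝ) 1, ‖Q x - Γ x‖ ≤ (n:ℝ) * (2*ε) := by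
    intro x hx
    have hexp : Q x - Γ x = ∑ k, (q k x - Γ x k) • EuclideanSpace.single k (1:ℂ) := by
      conv_lhs => rw [hQ]; rw [← euclid_sum_single' (Γ x)]
      rw [← Finset.sum_sub_distrib]
      exact Finset.sum_congr rfl fun k _ => (sub_smul _ _ _).symm
    rw [hexp]
    refine le_trans (norm_sum_le _ _) ?_
    have hterm : ∀ k : Fin n, ‖(q k x - Γ x k) • EuclideanSpace.single k (1:ℂ)‖ ≤ 2*ε := by
      intro k
      rw [norm_smul, EuclideanSpace.norm_single]
      have e1 : q k x = ((((p k).eval x : ℝ)) : ℂ) + Complex.I * ((((r k).eval x : ℝ)) : ℂ) := by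
        simp only [hq]
        rw [aeval_real', aeval_real']
      have h2 : ‖q k x - Γ x k‖
          ≤ |(p k).eval x - (Γ x k).re| + |(r k).eval x - (Γ x k).im| := by
        refine le_trans (Complex.norm_le_abs_re_add_abs_im _) ?_
        rw [e1]
        simp only [Complex.sub_re, Complex.add_re, Complex.ofReal_re, Complex.mul_re,
          Complex.I_re, Complex.I_im, Complex.ofReal_im, Complex.sub_im, Complex.add_im,
          Complex.mul_im, mul_zero, mul_one, zero_mul, sub_zero, zero_add, zero_sub,
          add_zero, one_mul, neg_zero]
        exact le_refl _
      have := (hp k x hx).le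
      have := (hr k x hx).le
      simp only [norm_one, mul_one]
      linarith
    refine le_trans (Finset.sum_le_sum (fun k _ => hterm k)) ?_
    rw [Finset.sum_const, Finset.card_univ, Fintype.card_fin, nsmul_eq_mul]
  set P : ℂ → Cn n := fun ζ => Q ζ + (1 - ζ) • (Γ 0 - Q 0) + ζ • (Γ 1 - Q 1) with hP
  have hPdiff : Differentiable ℂ P := by
    apply Differentiable.add
    apply Differentiable.add hQdiff
    · exact ((differentiable_const _).sub differentiable_id).smul_const _
    · exact differentiable_id.smul_const _
  have hP0 : P 0 = Γ 0 := by simp [hP]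
  have hP1 : P 1 = Γ 1 := by simp [hP]
  have hA : ‖Γ 0 - Q 0‖ ≤ (n:ℝ)*(2*ε) := by
    have h0 := hQbound 0 (by norm_num)
    rw [norm_sub_rev]
    simpa using h0
  have hB : ‖Γ 1 - Q 1‖ ≤ (n:ℝ)*(2*ε) := by
    have h1 := hQbound 1 (by norm_num)
    rw [norm_sub_rev]
    simpa using h1
  refine ⟨P, hPdiff, hP0, hP1, ?_⟩
  intro x hx
  have hsplit : P x - Γ x
      = (Q x - Γ x) + (1 - (x:ℂ)) • (Γ 0 - Q 0) + (x:ℂ) • (Γ 1 - Q 1) := by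
    rw [hP]; ring_nf; abel
  rw [hsplit]
  have hx0 : (0:ℝ) ≤ x := hx.1
  have hx1 : x ≤ 1 := hx.2
  have e2 : ‖(1 - (x:ℂ)) • (Γ 0 - Q 0)‖ ≤ (n:ℝ)*(2*ε) := by
    rw [norm_smul]
    have : ‖(1 - (x:ℂ))‖ = 1 - x := by
      rw [show (1 - (x:ℂ)) = (((1-x:ℝ)):ℂ) by push_cast; ring, Complex.norm_real]
      exact _root_.abs_of_nonneg (by linarith)
    rw [this]
    nlinarith [norm_nonneg (Γ 0 - Q 0), hA,
      mul_nonneg (mul_nonneg (Nat.cast_nonneg n) (by norm_num : (0:ℝ) ≤ 2)) hε.le]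
  have e3 : ‖(x:ℂ) • (Γ 1 - Q 1)‖ ≤ (n:ℝ)*(2*ε) := by
    rw [norm_smul]
    have : ‖(x:ℂ)‖ = x := by rw [Complex.norm_real]; exact _root_.abs_of_nonneg hx0
    rw [this]
    nlinarith [norm_nonneg (Γ 1 - Q 1), hB,
      mul_nonneg (mul_nonneg (Nat.cast_nonneg n) (by norm_num : (0:ℝ) ≤ 2)) hε.le]
  calc ‖Q x - Γ x + (1 - (x:ℂ)) • (Γ 0 - Q 0) + (x:ℂ) • (Γ 1 - Q 1)‖
      ≤ ‖Q x - Γ x + (1 - (x:ℂ)) • (Γ 0 - Q 0)‖ + ‖(x:ℂ) • (Γ 1 - Q 1)‖ := norm_add_le _ _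
    _ ≤ ‖Q x - Γ x‖ + ‖(1 - (x:ℂ)) • (Γ 0 - Q 0)‖ + ‖(x:ℂ) • (Γ 1 - Q 1)‖ := by
        have := norm_add_le (Q x - Γ x) ((1 - (x:ℂ)) • (Γ 0 - Q 0))
        linarith
    _ ≤ 3 * ((n:ℝ) * (2*ε)) := by
        have := hQbound x hx
        linarith

/-- In an open connected set there is an analytic disc through any two points. -/
private lemma exists_disc {n : ℕ} (G : Set (Cn n)) (hGopen : IsOpen G)
    (hGconn : IsPreconnected G) (a z0 : Cn n) (ha : a ∈ G) (hz0 : z0 ∈ G) :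
    ∃ (ψ : ℂ → Cn n) (t : ℝ), 0 < t ∧ t < 1 ∧
      DifferentiableOn ℂ ψ (ball (0:ℂ) 1) ∧ Set.MapsTo ψ (ball (0:ℂ) 1) G ∧
      ψ 0 = a ∧ ψ (t:ℂ) = z0 := by
  -- a path from a to z0 inside G
  have hconn : IsConnected G := ⟨⟨a, ha⟩, hGconn⟩
  have hpath : IsPathConnected G := hGopen.isConnected_iff_isPathConnected.mp hconn
  obtain ⟨γ, hγ⟩ := hpath.joinedIn a ha z0 hz0
  set Γ : ℝ → Cn n := fun x => γ (Set.projIcc 0 1 zero_le_one x) with hΓdef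
  have hΓcont : Continuous Γ := γ.continuous.comp continuous_projIcc
  have hΓ0 : Γ 0 = a := by
    simp only [hΓdef, Set.projIcc_left]
    exact γ.source
  have hΓ1 : Γ 1 = z0 := by
    simp only [hΓdef, Set.projIcc_right]
    exact γ.target
  have hΓG : ∀ x : ℝ, Γ x ∈ G := fun x => hγ _
  -- compact image and a safety margin δ
  set K₀ : Set (Cn n) := Γ '' Icc (0:ℝ) 1 with hK₀def
  have hK₀cpt : IsCompact K₀ := isCompact_Icc.image hΓcont
  have hK₀G : K₀ ⊆ G := by rintro _ ⟨x, _, rfl⟩; exact hΓG x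
  obtain ⟨δ, hδpos, hδ⟩ := hK₀cpt.exists_thickening_subset_open hGopen hK₀G
  -- entire approximation of the path
  set ε : ℝ := δ/(16*((n:ℝ)+1)) with hεdef
  have hεpos : 0 < ε := by positivity
  obtain ⟨P, hPdiff, hP0, hP1, hPnear⟩ := poly_approx Γ hΓcont hεpos
  have hP0' : P 0 = a := by rw [hP0, hΓ0]
  have hP1' : P 1 = z0 := by rw [hP1, hΓ1]
  have hPnear' : ∀ x ∈ Icc (0:ℝ) 1, ‖P x - Γ x‖ < δ/2 := by
    intro x hx
    refine lt_of_le_of_lt (hPnear x hx) ?_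
    have hn : (0:ℝ) ≤ (n:ℝ) := Nat.cast_nonneg n
    rw [hεdef]
    have h16 : (0:ℝ) < 16*((n:ℝ)+1) := by positivity
    have key : 3 * ((n:ℝ) * (2 * (δ / (16 * ((n:ℝ)+1))))) = δ * (6*(n:ℝ)) / (16*((n:ℝ)+1)) := by
      ring
    rw [key, div_lt_div_iff₀ h16 (by norm_num : (0:ℝ) < 2)]
    nlinarith [hδpos, hn]
  -- uniform continuity of P on a big ball
  obtain ⟨d, hdpos, hd⟩ := (Metric.uniformContinuousOn_iff).mp
    ((isCompact_closedBall (0:ℂ) 4).uniformContinuousOn_of_continuous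
      hPdiff.continuous.continuousOn) (δ/2) (half_pos hδpos)
  -- the strip parameter
  set c : ℝ := min (1/2) (d/4) with hcdef
  have hcpos : 0 < c := lt_min (by norm_num) (by positivity)
  have hc12 : c ≤ 1/2 := min_le_left _ _
  have hcd : c ≤ d/4 := min_le_right _ _
  -- the disc map
  set u : ℂ → ℂ := fun w => (1 + Complex.sin (vf c w))/2 with hudef
  set ψ : ℂ → Cn n := fun w => P (u w) with hψdef
  set sv : ℂ → ℝ := fun w => (1 + Real.sin ((vf c w).re))/2 with hsvdef
  have hsv01 : ∀ w, sv w ∈ Icc (0:ℝ) 1 := by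
    intro w
    constructor
    · have := Real.neg_one_le_sin ((vf c w).re); simp only [hsvdef]; linarith
    · have := Real.sin_le_one ((vf c w).re); simp only [hsvdef]; linarith
  have hus : ∀ w ∈ ball (0:ℂ) 1, ‖u w - ((sv w : ℝ) : ℂ)‖ ≤ c := by
    intro w hw
    have h1 := sin_est' hcpos hc12 (vf_im hcpos hw)
    have he : u w - ((sv w : ℝ) : ℂ)
        = (Complex.sin (vf c w) - ((Real.sin ((vf c w).re) : ℝ) : ℂ))/2 := by
      simp only [hudef, hsvdef]
      push_cast
      ring
    rw [he, norm_div]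
    simp only [Complex.norm_two]
    linarith
  have husG : ∀ w ∈ ball (0:ℂ) 1, ψ w ∈ G := by
    intro w hw
    have h1 : u w ∈ closedBall (0:ℂ) 4 := by
      rw [mem_closedBall, dist_zero_right]
      have h2 : ‖u w‖ ≤ ‖u w - ((sv w : ℝ) : ℂ)‖ + ‖((sv w : ℝ) : ℂ)‖ := by
        have := norm_add_le (u w - ((sv w : ℝ) : ℂ)) ((sv w : ℝ) : ℂ)
        simpa using this
      have h3 : ‖((sv w : ℝ) : ℂ)‖ ≤ 1 := by
        rw [Complex.norm_real, Real.norm_eq_abs, _root_.abs_of_nonneg (hsv01 w).1]; exact (hsv01 w).2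
      have := hus w hw
      linarith
    have h2 : ((sv w : ℝ) : ℂ) ∈ closedBall (0:ℂ) 4 := by
      rw [mem_closedBall, dist_zero_right, Complex.norm_real]
      rw [Real.norm_eq_abs, _root_.abs_of_nonneg (hsv01 w).1]
      linarith [(hsv01 w).2]
    have h3 : dist (u w) ((sv w : ℝ) : ℂ) < d := by
      rw [Complex.dist_eq]
      calc ‖u w - ((sv w : ℝ) : ℂ)‖ ≤ c := hus w hw
        _ ≤ d/4 := hcd
        _ < d := by linarith
    have h4 : dist (P (u w)) (P ((sv w : ℝ) : ℂ)) < δ/2 := hd _ h1 _ h2 h3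
    have h5 : dist (P ((sv w : ℝ) : ℂ)) (Γ (sv w)) < δ/2 := by
      rw [dist_eq_norm]
      exact hPnear' (sv w) (hsv01 w)
    have h6 : dist (ψ w) (Γ (sv w)) < δ :=
      lt_of_le_of_lt (dist_triangle _ (P ((sv w : ℝ) : ℂ)) _) (by simp only [hψdef]; linarith)
    apply hδ
    rw [Metric.mem_thickening_iff]
    exact ⟨Γ (sv w), ⟨sv w, hsv01 w, rfl⟩, h6⟩
  have hψdiff : DifferentiableOn ℂ ψ (ball (0:ℂ) 1) := by
    intro w hw
    have hu : DifferentiableAt ℂ u w := by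
      have hs : DifferentiableAt ℂ (fun w => Complex.sin (vf c w)) w :=
        (Complex.differentiable_sin _).comp w (vf_diff c hw)
      simp only [hudef]
      exact ((differentiableAt_const _).add hs).div_const 2
    exact ((hPdiff (u w)).comp w hu).differentiableWithinAt
  -- value at 0
  have hψ0 : ψ 0 = a := by
    have hu0 : u 0 = 0 := by
      simp only [hudef, vf_zero c]
      rw [Complex.sin_neg, ← Complex.ofReal_sin, Real.sin_pi_div_two]
      norm_num
    simp only [hψdef, hu0, hP0']
  -- the target point
  set L : ℝ := Real.pi^2/(2*c) with hLdef
  set t : ℝ := (Real.exp L - 1)/(Real.exp L + 1) with htdef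
  have hexp1 : 1 < Real.exp L := by
    have hL : 0 < L := by have := Real.pi_pos; positivity
    calc (1:ℝ) = Real.exp 0 := by simp
      _ < Real.exp L := Real.exp_lt_exp.mpr hL
  have ht0 : 0 < t := div_pos (by linarith) (by linarith)
  have ht1 : t < 1 := (div_lt_one (by linarith)).mpr (by linarith)
  have hψt : ψ (t:ℂ) = z0 := by
    have hvt : vf c (t:ℂ) = ((Real.pi/2 : ℝ) : ℂ) := vf_t hcpos
    have hut : u (t:ℂ) = 1 := by
      simp only [hudef, hvt]
      rw [← Complex.ofReal_sin, Real.sin_pi_div_two]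
      norm_num
    simp only [hψdef, hut, hP1']
  exact ⟨ψ, t, ht0, ht1, hψdiff, husG, hψ0, hψt⟩

end ExtremalHelpers

/-- In a taut domain, extremal discs for the Lempert function exist: for `a ≠ z₀` in `G`
there are `φ ∈ 𝒪(𝔻, G)` and `λ₀ ∈ (0,1)` with `φ(0) = a`, `φ(λ₀) = z₀` and
`ℓ̃*_G(a, z₀) = λ₀`. -/
theorem taut_extremal_disc_exists {n : ℕ} (G : Set (Cn n))
    (hGopen : IsOpen G) (hGconn : IsPreconnected G) (hTaut : Taut G)
    (a z0 : Cn n) (ha : a ∈ G) (hz0 : z0 ∈ G) (hne : z0 ≠ a) :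
    ∃ (φ : ℂ → Cn n) (lam0 : ℝ), 0 < lam0 ∧ lam0 < 1 ∧
      DifferentiableOn ℂ φ (ball (0:ℂ) 1) ∧ Set.MapsTo φ (ball (0:ℂ) 1) G ∧
      φ 0 = a ∧ φ (lam0 : ℂ) = z0 ∧ lempertStar G a z0 = lam0 := by
  obtain ⟨ψ₀, t₀, ht₀0, ht₀1, hψ₀d, hψ₀m, hψ₀0, hψ₀t⟩ :=
    exists_disc G hGopen hGconn a z0 ha hz0
  set S := { t : ℝ | ∃ (φ : ℂ → Cn n) (lam : ℂ), ‖lam‖ < 1 ∧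
    DifferentiableOn ℂ φ (ball (0:ℂ) 1) ∧ Set.MapsTo φ (ball (0:ℂ) 1) G ∧
    φ 0 = a ∧ φ lam = z0 ∧ t = ‖lam‖ } with hSdef
  have habs_t₀ : ‖((t₀:ℝ):ℂ)‖ = t₀ := by
    rw [Complex.norm_real, Real.norm_eq_abs, _root_.abs_of_pos ht₀0]
  have ht₀mem : t₀ ∈ S :=
    ⟨ψ₀, ((t₀:ℝ):ℂ), by rw [habs_t₀]; exact ht₀1, hψ₀d, hψ₀m, hψ₀0, hψ₀t, habs_t₀.symm⟩
  have hSne : S.Nonempty := ⟨t₀, ht₀mem⟩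
  have hSbdd : BddBelow S := by
    refine ⟨0, fun s hs => ?_⟩
    obtain ⟨φ, lam, _, _, _, _, _, hs⟩ := hs
    rw [hs]; exact norm_nonneg lam
  set t : ℝ := sInf S with htdef
  have hlem : lempertStar G a z0 = t := rfl
  have htnn : 0 ≤ t := le_csInf hSne (fun s hs => by
    obtain ⟨φ, lam, _, _, _, _, _, hs⟩ := hs
    rw [hs]; exact norm_nonneg lam)
  have ht1 : t < 1 := lt_of_le_of_lt (csInf_le hSbdd ht₀mem) ht₀1
  -- minimizing sequence with real positive parameters
  have hseq : ∀ j : ℕ, ∃ (φ : ℂ → Cn n) (r : ℝ), t ≤ r ∧ r < t + 1/((j:ℝ)+1) ∧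
      DifferentiableOn ℂ φ (ball (0:ℂ) 1) ∧ Set.MapsTo φ (ball (0:ℂ) 1) G ∧
      φ 0 = a ∧ φ ((r:ℝ):ℂ) = z0 := by
    intro j
    obtain ⟨s, hsmem, hslt⟩ := Real.lt_sInf_add_pos hSne
      (show (0:ℝ) < 1/((j:ℝ)+1) by positivity)
    obtain ⟨φ, lam, hlam1, hφd, hφm, hφ0, hφlam, hsval⟩ := hsmem
    have hlam0 : lam ≠ 0 := by
      rintro rfl
      exact hne (hφlam ▸ hφ0 ▸ rfl)
    set r : ℝ := ‖lam‖ with hrdef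
    have hr0 : 0 < r := norm_pos_iff.mpr hlam0
    set cst : ℂ := lam / ((r:ℝ):ℂ) with hcstdef
    have hrC : ((r:ℝ):ℂ) ≠ 0 := by
      simpa using ne_of_gt hr0
    have hcabs : ‖cst‖ = 1 := by
      rw [hcstdef, norm_div, Complex.norm_real, Real.norm_eq_abs, _root_.abs_of_pos hr0, ← hrdef,
        div_self (ne_of_gt hr0)]
    have hrmem : r ∈ S := ⟨φ, lam, hlam1, hφd, hφm, hφ0, hφlam, hrdef⟩
    have hmul : ∀ w : ℂ, w ∈ ball (0:ℂ) 1 → cst * w ∈ ball (0:ℂ) 1 := by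
      intro w hw
      rw [mem_ball, dist_zero_right, norm_mul, hcabs, one_mul]
      simpa [mem_ball, dist_zero_right] using hw
    refine ⟨fun w => φ (cst * w), r, csInf_le hSbdd hrmem, ?_, ?_, ?_, ?_, ?_⟩
    · rw [← hsval]; exact hslt
    · intro w hw
      have hdat : DifferentiableAt ℂ φ (cst * w) :=
        (hφd (cst * w) (hmul w hw)).differentiableAt (isOpen_ball.mem_nhds (hmul w hw))
      exact (hdat.comp w (by fun_prop)).differentiableWithinAt
    · intro w hw
      exact hφm (hmul w hw)
    · simp [hφ0]
    · show φ (cst * ((r:ℝ):ℂ)) = z0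
      rw [hcstdef, div_mul_cancel₀ _ hrC]
      exact hφlam
  choose Φ rr hrge hrlt hΦd hΦm hΦ0 hΦr using hseq
  obtain ⟨σ, hσmono, hσalt⟩ := hTaut Φ (fun j => ⟨hΦd j, hΦm j⟩)
  rcases hσalt with h | hdiv
  · obtain ⟨ψ, hψd, hψm, hψconv⟩ := h
    have h0ball : (0:ℂ) ∈ ball (0:ℂ) 1 := by simp
    have htball : ((t:ℝ):ℂ) ∈ ball (0:ℂ) 1 := by
      rw [mem_ball, dist_zero_right, Complex.norm_real, Real.norm_eq_abs,
        _root_.abs_of_nonneg htnn]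
      exact ht1
    -- convergence of the parameters
    have hrtend : Tendsto rr atTop (𝓝 t) := by
      have hupper : Tendsto (fun j : ℕ => t + 1/((j:ℝ)+1)) atTop (𝓝 (t + 0)) :=
        tendsto_const_nhds.add tendsto_one_div_add_atTop_nhds_zero_nat
      rw [add_zero] at hupper
      exact tendsto_of_tendsto_of_tendsto_of_le_of_le tendsto_const_nhds hupper
        hrge (fun j => (hrlt j).le)
    have hrσ : Tendsto (fun j => rr (σ j)) atTop (𝓝 t) := hrtend.comp hσmono.tendsto_atTop
    -- ψ 0 = a
    have hψ0 : ψ 0 = a := by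
      have h0 : Tendsto (fun j => Φ (σ j) 0) atTop (𝓝 (ψ 0)) :=
        hψconv.tendsto_at h0ball
      have heq : (fun j => Φ (σ j) 0) = fun _ => a := funext fun j => hΦ0 (σ j)
      rw [heq] at h0
      exact tendsto_nhds_unique h0 tendsto_const_nhds
    -- ψ t = z0
    have hψt : ψ ((t:ℝ):ℂ) = z0 := by
      have hcw : ContinuousWithinAt ψ (ball (0:ℂ) 1) ((t:ℝ):ℂ) :=
        (hψd.continuousOn) _ htball
      have hg : Tendsto (fun j => ((rr (σ j) : ℝ) : ℂ)) atTop (𝓝[ball (0:ℂ) 1] ((t:ℝ):ℂ)) := by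
        rw [tendsto_nhdsWithin_iff]
        constructor
        · exact (Complex.continuous_ofReal.tendsto t).comp hrσ
        · have hev : ∀ᶠ j in atTop, rr (σ j) < 1 := hrσ.eventually_lt_const ht1
          filter_upwards [hev] with j hj
          rw [mem_ball, dist_zero_right, Complex.norm_real, Real.norm_eq_abs,
            _root_.abs_of_nonneg (le_trans htnn (hrge (σ j)))]
          exact hj
      have hlim : Tendsto (fun j => Φ (σ j) ((rr (σ j) : ℝ):ℂ)) atTop (𝓝 (ψ ((t:ℝ):ℂ))) :=
        hψconv.tendsto_comp hcw htball hg
      have heq : (fun j => Φ (σ j) ((rr (σ j) : ℝ):ℂ)) = fun _ => z0 :=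
        funext fun j => hΦr (σ j)
      rw [heq] at hlim
      exact tendsto_nhds_unique hlim tendsto_const_nhds
    have htpos : 0 < t := by
      rcases lt_or_eq_of_le htnn with h | h
      · exact h
      · exfalso
        apply hne
        rw [← h] at hψt
        rw [show ((0:ℝ):ℂ) = (0:ℂ) from by norm_num] at hψt
        rw [← hψt]
        exact hψ0
    exact ⟨ψ, t, htpos, ht1, hψd, hψm, hψ0, hψt, hlem⟩
  · exfalso
    have h := hdiv {0} {a}
      (by intro x hx; rw [mem_singleton_iff] at hx; rw [hx]; simp)
      isCompact_singleton
      (by intro x hx; rw [mem_singleton_iff] at hx; rw [hx]; exact ha)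
      isCompact_singleton
    obtain ⟨j, hj⟩ := h.exists
    exact (hj 0 rfl) (by rw [hΦ0 (σ j)]; rfl)

end
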